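/- arXiv:1804.00989 — 2 statements merged into one kernel-verified Lean document; each statement's English description precedes it below -/
import Mathlib

section
/- For any v > u > 0 and any S ⊆ {1,…,p}: κ̂²(v,S) ≥ min{ |S|·‖Xb‖₂²/n : ‖b_S‖₁ − u‖b_{−S}‖₁ = 1 and ‖b‖₁ ≤ 1 + (1+u)/(v−u) }. That is, for vectors in the tighter cone one may additionally assume an ℓ₁-norm bound. -/
/-
Rescaling moves a vector of the `v`-cone into the `u`-cone without increasing `‖Xb‖₂²`. If
`‖b_S‖₁ - v‖b_{-S}‖₁ = 1`, then `D := ‖b_S‖₁ - u‖b_{-S}‖₁ = 1 + (v - u)‖b_{-S}‖₁ ≥ 1`, so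
`b / D` satisfies the `u`-constraint, has a smaller quadratic form, and
`‖b / D‖₁ = 1 + (1 + u)‖b_{-S}‖₁ / D ≤ 1 + (1 + u) / (v - u)`.
For `S = ∅` both constraint sets are empty, and both infima are the junk value `sInf ∅ = 0`.
-/

open Finset

noncomputable def l1 {p : ℕ} (b : Fin p → ℝ) : ℝ := ∑ j, |b j|

def restr {p : ℕ} (S : Finset (Fin p)) (b : Fin p → ℝ) : Fin p → ℝ :=
  fun j => if j ∈ S then b j else 0

noncomputable def qf {n p : ℕ} (X : Matrix (Fin n) (Fin p) ℝ) (b : Fin p → ℝ) : ℝ :=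
  ∑ i, (X.mulVec b i) ^ 2

/-- The compatibility constant κ̂(v,S) (square root of the minimal value). -/
noncomputable def kappaHat {n p : ℕ} (X : Matrix (Fin n) (Fin p) ℝ) (S : Finset (Fin p))
    (v : ℝ) : ℝ :=
  Real.sqrt (sInf {c : ℝ | ∃ b : Fin p → ℝ,
    l1 (restr S b) - v * l1 (restr Sᶜ b) = 1 ∧ c = (S.card : ℝ) * qf X b / n})

lemma l1_nonneg {p : ℕ} (b : Fin p → ℝ) : 0 ≤ l1 b :=
  sum_nonneg fun _ _ => abs_nonneg _

lemma l1_smul {p : ℕ} (t : ℝ) (b : Fin p → ℝ) : l1 (t • b) = |t| * l1 b := by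
  simp only [l1, Pi.smul_apply, smul_eq_mul, abs_mul, mul_sum]

lemma l1_eq_l1_restr_add_l1_restr_compl {p : ℕ} (S : Finset (Fin p)) (b : Fin p → ℝ) :
    l1 b = l1 (restr S b) + l1 (restr Sᶜ b) := by
  simp only [l1, restr, ← sum_add_distrib]
  refine sum_congr rfl fun j _ => ?_
  by_cases h : j ∈ S <;> simp [h]

lemma restr_smul {p : ℕ} (S : Finset (Fin p)) (t : ℝ) (b : Fin p → ℝ) :
    restr S (t • b) = t • restr S b := by
  ext j
  by_cases h : j ∈ S <;> simp [restr, h]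

lemma restr_empty {p : ℕ} (b : Fin p → ℝ) : restr ∅ b = 0 := by
  ext j
  simp [restr]

lemma qf_nonneg {n p : ℕ} (X : Matrix (Fin n) (Fin p) ℝ) (b : Fin p → ℝ) : 0 ≤ qf X b :=
  sum_nonneg fun _ _ => sq_nonneg _

lemma qf_smul {n p : ℕ} (X : Matrix (Fin n) (Fin p) ℝ) (t : ℝ) (b : Fin p → ℝ) :
    qf X (t • b) = t ^ 2 * qf X b := by
  simp only [qf, Matrix.mulVec_smul, Pi.smul_apply, smul_eq_mul, mul_pow, mul_sum]

lemma qf_smul_le {n p : ℕ} (X : Matrix (Fin n) (Fin p) ℝ) {t : ℝ} (ht : |t| ≤ 1)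
    (b : Fin p → ℝ) : qf X (t • b) ≤ qf X b := by
  rw [qf_smul]
  have : t ^ 2 ≤ 1 := by rw [← sq_abs]; exact pow_le_one₀ (abs_nonneg t) ht
  exact mul_le_of_le_one_left (qf_nonneg X b) this

lemma exists_restr_sub_mul_restr_compl_eq_one {p : ℕ} {S : Finset (Fin p)} (hS : S.Nonempty)
    (w : ℝ) : ∃ b : Fin p → ℝ, l1 (restr S b) - w * l1 (restr Sᶜ b) = 1 := by
  obtain ⟨j, hj⟩ := hS
  refine ⟨Pi.single j 1, ?_⟩
  have hin : restr S (Pi.single j 1) = Pi.single j 1 := by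
    ext i
    by_cases h : i = j <;> simp [restr, h, hj]
  have hout : restr Sᶜ (Pi.single j 1) = 0 := by
    ext i
    by_cases h : i = j <;> simp [restr, h, hj]
  simp only [hin, hout, l1, Pi.zero_apply, abs_zero, sum_const_zero, mul_zero, sub_zero]
  rw [sum_eq_single j] <;> simp_all

lemma restr_empty_sub_mul_restr_compl_ne_one {p : ℕ} {w : ℝ} (hw : 0 ≤ w) (b : Fin p → ℝ) :
    l1 (restr ∅ b) - w * l1 (restr ∅ᶜ b) ≠ 1 := by
  have := mul_nonneg hw (l1_nonneg (restr ∅ᶜ b))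
  simp only [restr_empty, l1, Pi.zero_apply, abs_zero, sum_const_zero] at this ⊢
  linarith

lemma add_div_sub_mul_le {u v s r : ℝ} (hu : -1 ≤ u) (huv : u < v) (hr : 0 ≤ r)
    (h : s - v * r = 1) : (s + r) / (s - u * r) ≤ 1 + (1 + u) / (v - u) := by
  have hvu : 0 < v - u := sub_pos.mpr huv
  have hD : s - u * r = 1 + (v - u) * r := by linarith
  have hDpos : 0 < 1 + (v - u) * r := by positivity
  have hq : (1 + u) / (v - u) * (v - u) = 1 + u := div_mul_cancel₀ _ hvu.ne'
  have hq0 : 0 ≤ (1 + u) / (v - u) := div_nonneg (by linarith) hvu.le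
  rw [hD, div_le_iff₀ hDpos]
  nlinarith

lemma exists_smul_mem_cone_of_mem_cone {p : ℕ} {S : Finset (Fin p)} {u v : ℝ} (hu : -1 ≤ u)
    (huv : u < v) {b : Fin p → ℝ} (hb : l1 (restr S b) - v * l1 (restr Sᶜ b) = 1) :
    ∃ t : ℝ, |t| ≤ 1 ∧ l1 (restr S (t • b)) - u * l1 (restr Sᶜ (t • b)) = 1 ∧
      l1 (t • b) ≤ 1 + (1 + u) / (v - u) := by
  set s := l1 (restr S b)
  set r := l1 (restr Sᶜ b)
  have hr : 0 ≤ r := l1_nonneg _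
  have hD : 1 ≤ s - u * r := by nlinarith [sub_pos.mpr huv]
  have hDpos : 0 < s - u * r := by linarith
  refine ⟨(s - u * r)⁻¹, ?_, ?_, ?_⟩
  · rw [abs_of_pos (inv_pos.mpr hDpos)]
    exact inv_le_one_of_one_le₀ hD
  · rw [restr_smul, restr_smul, l1_smul, l1_smul, abs_of_pos (inv_pos.mpr hDpos)]
    change (s - u * r)⁻¹ * s - u * ((s - u * r)⁻¹ * r) = 1
    field_simp
  · rw [l1_smul, abs_of_pos (inv_pos.mpr hDpos), l1_eq_l1_restr_add_l1_restr_compl S b,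
      inv_mul_eq_div]
    exact add_div_sub_mul_le hu huv hr hb

theorem stmt2 {n p : ℕ} (X : Matrix (Fin n) (Fin p) ℝ) (S : Finset (Fin p))
    (u v : ℝ) (hu : 0 < u) (huv : u < v) :
    sInf {c : ℝ | ∃ b : Fin p → ℝ,
        l1 (restr S b) - v * l1 (restr Sᶜ b) = 1 ∧ c = (S.card : ℝ) * qf X b / n} ≥
    sInf {c : ℝ | ∃ b : Fin p → ℝ,
        l1 (restr S b) - u * l1 (restr Sᶜ b) = 1 ∧
        l1 b ≤ 1 + (1 + u) / (v - u) ∧ c = (S.card : ℝ) * qf X b / n} := by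
  rcases S.eq_empty_or_nonempty with rfl | hS
  · simp only [restr_empty_sub_mul_restr_compl_ne_one hu.le,
      restr_empty_sub_mul_restr_compl_ne_one (hu.trans huv).le, false_and, exists_false,
      Set.ofPred_false, ge_iff_le, le_refl]
  obtain ⟨b₀, hb₀⟩ := exists_restr_sub_mul_restr_compl_eq_one hS v
  refine le_csInf ⟨_, b₀, hb₀, rfl⟩ ?_
  rintro _ ⟨b, hb, rfl⟩
  obtain ⟨t, ht, hcone, hl1⟩ := exists_smul_mem_cone_of_mem_cone (by linarith) huv hb
  have hbdd : BddBelow {c : ℝ | ∃ b : Fin p → ℝ,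
      l1 (restr S b) - u * l1 (restr Sᶜ b) = 1 ∧
      l1 b ≤ 1 + (1 + u) / (v - u) ∧ c = (S.card : ℝ) * qf X b / n} :=
    ⟨0, by rintro _ ⟨b, -, -, rfl⟩; have := qf_nonneg X b; positivity⟩
  calc _ ≤ (S.card : ℝ) * qf X (t • b) / n := csInf_le hbdd ⟨t • b, hcone, hl1, rfl⟩
    _ ≤ (S.card : ℝ) * qf X b / n := by gcongr; exact qf_smul_le X ht b
end

section
/- (Lower bound part of TV compatibility.) With X the cumulative-sum matrix X_{j,i} = 1{j≥i}, S = {d₁+1, d₁+d₂+1, …, d₁+⋯+d_s+1}, each d_j even for 2 ≤ j ≤ s, and d_{s+1} = n − Σ d_j: for every b ∈ ℝⁿ with ‖b_S‖₁ − ‖b_{−(S∪{1})}‖₁ = 1 one has ‖Xb‖₂²/n ≥ 1 / ( n/d₁ + Σ_{j=2}^s 4n/d_j + n/d_{s+1} ). -/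
open Finset

def pos (d : ℕ → ℕ) (j : ℕ) : ℕ := ∑ i ∈ Finset.Icc 1 j, d i

noncomputable def csum (b : ℕ → ℝ) (i : ℕ) : ℝ := ∑ k ∈ Finset.Icc 1 i, b k

def jumpSet (d : ℕ → ℕ) (s : ℕ) : Finset ℕ :=
  (Finset.Icc 1 s).image (fun j => pos d j + 1)

/-!
Write `f = csum b`. Give each jump `p + 1` (with `p = pos d j`) a window `(p - a, p + c]` made of
the adjacent halves of the neighbouring segments, the outer segments going entirely to the first
and last jump. Choosing `i ≤ p < i'` in the window where `|f|` is smallest on either side,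
`|b (p + 1)| ≤ |f i| + |f i'| + ∑ |b k|` over the other increments of the window, while
`a f(i)² + c f(i')² ≤ ∑ f²` over the window. Cauchy–Schwarz, within each window and then over the
disjoint windows, gives `1 ≤ ‖b_S‖₁ - ‖b_{-(S ∪ {1})}‖₁ ≤ √(∑ f²) √K` with
`K = ∑ (1/a + 1/c) = 1/d₁ + ∑ 4/d_j + 1/d_{s+1}`; the evenness of the inner `d_j` makes their
halves exact.
-/

lemma Finset.exists_mem_card_mul_le_sum {ι : Type*} {B : Finset ι} (hB : B.Nonempty)
    (g : ι → ℝ) : ∃ i ∈ B, #B * g i ≤ ∑ x ∈ B, g x := by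
  obtain ⟨i, hi, hmin⟩ := B.exists_min_image g hB
  exact ⟨i, hi, by simpa using B.card_nsmul_le_sum g _ hmin⟩

lemma Finset.sum_sum_le_sum_of_pairwiseDisjoint {ι α M : Type*} [DecidableEq α]
    [AddCommMonoid M] [PartialOrder M] [IsOrderedAddMonoid M] {J : Finset ι} {W : ι → Finset α}
    {U : Finset α} {f : α → M}
    (hW : (J : Set ι).PairwiseDisjoint W) (hWU : ∀ j ∈ J, W j ⊆ U) (hf : ∀ x ∈ U, 0 ≤ f x) :
    ∑ j ∈ J, ∑ x ∈ W j, f x ≤ ∑ x ∈ U, f x := by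
  rw [← sum_biUnion hW]
  exact sum_le_sum_of_subset_of_nonneg (biUnion_subset.mpr hWU) fun x hx _ => hf x hx

lemma abs_add_abs_le_sqrt_mul_sqrt {x y A C a c : ℝ} (ha : 0 < a) (hc : 0 < c)
    (hx : a * x ^ 2 ≤ A) (hy : c * y ^ 2 ≤ C) :
    |x| + |y| ≤ √(A + C) * √(a⁻¹ + c⁻¹) := by
  rw [← Real.sqrt_mul (by nlinarith [sq_nonneg x, sq_nonneg y])]
  apply Real.le_sqrt_of_sq_le
  have key : (|x| + |y|) ^ 2 * (a * c) ≤ (a * x ^ 2 + c * y ^ 2) * (a + c) := by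
    have := sq_nonneg (a * |x| - c * |y|)
    rw [← sq_abs x, ← sq_abs y]
    nlinarith
  calc (|x| + |y|) ^ 2 ≤ (a * x ^ 2 + c * y ^ 2) * (a⁻¹ + c⁻¹) := by
        rw [inv_add_inv ha.ne' hc.ne', mul_div_assoc', le_div_iff₀ (by positivity)]
        linarith
    _ ≤ (A + C) * (a⁻¹ + c⁻¹) := by gcongr

section CumulativeSum

variable (b : ℕ → ℝ)

lemma csum_sub_csum {i i' : ℕ} (h : i ≤ i') : csum b i' - csum b i = ∑ k ∈ Ioc i i', b k := by
  change ∑ k ∈ Ioc 0 i', b k - ∑ k ∈ Ioc 0 i, b k = _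
  rw [← sum_Ioc_consecutive b (Nat.zero_le i) h]
  ring

lemma abs_le_abs_csum_add_abs_csum_add {i i' q : ℕ} (hq : q ∈ Ioc i i') :
    |b q| ≤ |csum b i| + |csum b i'| + ∑ k ∈ (Ioc i i').erase q, |b k| := by
  obtain ⟨hiq, hqi'⟩ := mem_Ioc.mp hq
  have htel : b q = csum b i' - csum b i - ∑ k ∈ (Ioc i i').erase q, b k := by
    rw [csum_sub_csum b (hiq.le.trans hqi'), ← add_sum_erase _ _ hq]
    ring
  rw [htel]
  linarith [abs_sub (csum b i' - csum b i) (∑ k ∈ (Ioc i i').erase q, b k),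
    abs_sub (csum b i') (csum b i), abs_sum_le_sum_abs b ((Ioc i i').erase q)]

lemma abs_jump_le {p a c : ℕ} (ha : 0 < a) (hap : a ≤ p) (hc : 0 < c) :
    |b (p + 1)| ≤ √(∑ i ∈ Ioc (p - a) (p + c), csum b i ^ 2) * √((a : ℝ)⁻¹ + (c : ℝ)⁻¹) +
      ∑ k ∈ (Ioc (p - a + 1) (p + c)).erase (p + 1), |b k| := by
  obtain ⟨i, hi, hfi⟩ := exists_mem_card_mul_le_sum
    (nonempty_Ioc.mpr (by omega : p - a < p)) (csum b · ^ 2)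
  obtain ⟨i', hi', hfi'⟩ := exists_mem_card_mul_le_sum
    (nonempty_Ioc.mpr (by omega : p < p + c)) (csum b · ^ 2)
  rw [Nat.card_Ioc, Nat.sub_sub_self hap] at hfi
  rw [Nat.card_Ioc, Nat.add_sub_cancel_left] at hfi'
  rw [mem_Ioc] at hi hi'
  rw [← sum_Ioc_consecutive _ (Nat.sub_le p a) (Nat.le_add_right p c)]
  calc |b (p + 1)| ≤ |csum b i| + |csum b i'| + ∑ k ∈ (Ioc i i').erase (p + 1), |b k| :=
        abs_le_abs_csum_add_abs_csum_add b (mem_Ioc.mpr ⟨by omega, by omega⟩)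
    _ ≤ _ := by
      gcongr
      · exact abs_add_abs_le_sqrt_mul_sqrt (by positivity) (by positivity) hfi hfi'
      · omega
      · exact hi'.2

theorem sum_abs_jump_le {ι : Type*} (J : Finset ι) (p a c : ι → ℕ)
    (ha : ∀ j ∈ J, 0 < a j ∧ a j ≤ p j) (hc : ∀ j ∈ J, 0 < c j) :
    ∑ j ∈ J, |b (p j + 1)| ≤
      √(∑ j ∈ J, ∑ i ∈ Ioc (p j - a j) (p j + c j), csum b i ^ 2) *
          √(∑ j ∈ J, ((a j : ℝ)⁻¹ + (c j : ℝ)⁻¹)) +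
        ∑ j ∈ J, ∑ k ∈ (Ioc (p j - a j + 1) (p j + c j)).erase (p j + 1), |b k| := by
  calc ∑ j ∈ J, |b (p j + 1)|
      ≤ ∑ j ∈ J, (√(∑ i ∈ Ioc (p j - a j) (p j + c j), csum b i ^ 2) *
          √((a j : ℝ)⁻¹ + (c j : ℝ)⁻¹) +
            ∑ k ∈ (Ioc (p j - a j + 1) (p j + c j)).erase (p j + 1), |b k|) :=
        sum_le_sum fun j hj => abs_jump_le b (ha j hj).1 (ha j hj).2 (hc j hj)
    _ ≤ _ := by
      rw [sum_add_distrib]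
      gcongr
      exact Real.sum_sqrt_mul_sqrt_le J (fun j => sum_nonneg fun i _ => sq_nonneg _)
        (fun j => by positivity)

end CumulativeSum

lemma pos_mono (d : ℕ → ℕ) : Monotone (pos d) := fun _ _ h =>
  sum_le_sum_of_subset (Icc_subset_Icc_right h)

lemma pos_add_le_pos (d : ℕ → ℕ) {i j : ℕ} (h : i < j) : pos d i + d j ≤ pos d j := by
  rw [pos, pos, add_comm, ← sum_insert (by simp; omega)]
  exact sum_le_sum_of_subset (insert_subset (by simp; omega) (Icc_subset_Icc_right h.le))

/-- Segment `k` (of length `d k`, between jumps `k - 1` and `k`) is shared equally by its two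
jumps, except that the outer segments `1` and `s + 1` belong entirely to jumps `1` and `s`. -/
def blockLen (d : ℕ → ℕ) (s k : ℕ) : ℕ := if 2 ≤ k ∧ k ≤ s then d k / 2 else d k

def window (d : ℕ → ℕ) (s j : ℕ) : Finset ℕ :=
  Ioc (pos d j - blockLen d s j) (pos d j + blockLen d s (j + 1))

def variationSet (d : ℕ → ℕ) (s j : ℕ) : Finset ℕ :=
  (Ioc (pos d j - blockLen d s j + 1) (pos d j + blockLen d s (j + 1))).erase (pos d j + 1)

section Blocks

variable {d : ℕ → ℕ} {s : ℕ}

lemma blockLen_le (k : ℕ) : blockLen d s k ≤ d k := by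
  unfold blockLen; split_ifs <;> omega

lemma two_mul_blockLen_le {k : ℕ} (h2k : 2 ≤ k) (hks : k ≤ s) : 2 * blockLen d s k ≤ d k := by
  simp only [blockLen, if_pos (And.intro h2k hks)]
  omega

lemma one_le_blockLen {k : ℕ} (hk : 2 ≤ d k) : 1 ≤ blockLen d s k := by
  unfold blockLen; split_ifs <;> omega

lemma blockLen_le_pos {j : ℕ} (hj : 1 ≤ j) : blockLen d s j ≤ pos d j :=
  (blockLen_le j).trans (le_add_self.trans (pos_add_le_pos d hj))

lemma inv_blockLen_of_even {k : ℕ} (h2k : 2 ≤ k) (hks : k ≤ s) (hk : Even (d k)) :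
    (blockLen d s k : ℝ)⁻¹ = 2 / d k := by
  rw [blockLen, if_pos (And.intro h2k hks), Nat.cast_div hk.two_dvd two_ne_zero, inv_div,
    Nat.cast_ofNat]

lemma pairwiseDisjoint_window : (↑(Icc 1 s) : Set ℕ).PairwiseDisjoint (window d s) := by
  have hle : ∀ j ∈ Icc 1 s, ∀ j' ∈ Icc 1 s, j < j' →
      pos d j + blockLen d s (j + 1) ≤ pos d j' - blockLen d s j' := by
    intro j hj j' hj' hjj'
    rw [mem_Icc] at hj hj'
    have := pos_add_le_pos d hjj'
    have := pos_add_le_pos d (by omega : j < j + 1)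
    have := blockLen_le (d := d) (s := s) (j + 1)
    have := blockLen_le (d := d) (s := s) j'
    rcases (show j + 1 ≤ j' from hjj').eq_or_lt with rfl | hlt
    · have := two_mul_blockLen_le (d := d) (s := s) (by omega : 2 ≤ j + 1) hj'.2
      omega
    · have := pos_add_le_pos d hlt
      omega
  intro j hj j' hj' hne
  rcases hne.lt_or_gt with h | h
  · exact Ioc_disjoint_Ioc_of_le (hle j hj j' hj' h)
  · exact (Ioc_disjoint_Ioc_of_le (hle j' hj' j hj h)).symm

lemma variationSet_subset_window {j : ℕ} : variationSet d s j ⊆ window d s j :=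
  (erase_subset _ _).trans (Ioc_subset_Ioc_left (Nat.le_succ _))

lemma window_subset {j : ℕ} (hj : j ∈ Icc 1 s) : window d s j ⊆ Icc 1 (pos d (s + 1)) := by
  rw [mem_Icc] at hj
  have := pos_add_le_pos d (by omega : j < j + 1)
  have := pos_mono d (by omega : j + 1 ≤ s + 1)
  have := blockLen_le (d := d) (s := s) (j + 1)
  intro k hk
  simp only [window, mem_Ioc] at hk
  rw [mem_Icc]
  omega

lemma sum_inv_blockLen (hs : 1 ≤ s) (heven : ∀ j ∈ Icc 2 s, Even (d j)) :
    ∑ j ∈ Icc 1 s, ((blockLen d s j : ℝ)⁻¹ + (blockLen d s (j + 1) : ℝ)⁻¹) =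
      (d 1 : ℝ)⁻¹ + ∑ j ∈ Icc 2 s, 4 / (d j : ℝ) + (d (s + 1) : ℝ)⁻¹ := by
  have hfirst : ∑ j ∈ Icc 1 s, (blockLen d s j : ℝ)⁻¹ =
      (d 1 : ℝ)⁻¹ + ∑ j ∈ Icc 2 s, (blockLen d s j : ℝ)⁻¹ := by
    rw [← insert_Icc_add_one_left_eq_Icc hs, sum_insert (by simp), blockLen, if_neg (by omega)]
    rfl
  have hlast : ∑ j ∈ Icc 1 s, (blockLen d s (j + 1) : ℝ)⁻¹ =
      ∑ j ∈ Icc 2 s, (blockLen d s j : ℝ)⁻¹ + (d (s + 1) : ℝ)⁻¹ := by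
    have hshift := sum_map (Icc 1 s) (addRightEmbedding 1) fun j => (blockLen d s j : ℝ)⁻¹
    rw [map_add_right_Icc] at hshift
    have hlen : blockLen d s (s + 1) = d (s + 1) := if_neg (by omega)
    rw [← hlen, ← sum_Icc_succ_top (by omega : 2 ≤ s + 1)]
    exact hshift.symm
  have hmid : ∑ j ∈ Icc 2 s, 4 / (d j : ℝ) =
      ∑ j ∈ Icc 2 s, (blockLen d s j : ℝ)⁻¹ + ∑ j ∈ Icc 2 s, (blockLen d s j : ℝ)⁻¹ := by
    rw [← sum_add_distrib]
    refine sum_congr rfl fun j hj => ?_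
    rw [mem_Icc] at hj
    rw [inv_blockLen_of_even hj.1 hj.2 (heven j (mem_Icc.mpr hj))]
    ring
  rw [sum_add_distrib, hfirst, hlast, hmid]
  ring

variable (hd : ∀ j ∈ Icc 1 (s + 1), 2 ≤ d j)
include hd

lemma jump_mem_window {j : ℕ} (hj : j ∈ Icc 1 s) : pos d j + 1 ∈ window d s j := by
  rw [mem_Icc] at hj
  have := blockLen_le_pos (d := d) (s := s) hj.1
  have := one_le_blockLen (s := s) (hd (j + 1) (by simp; omega))
  simp only [window, mem_Ioc]
  omega

lemma sum_jumpSet {M : Type*} [AddCommMonoid M] (f : ℕ → M) : ∑ k ∈ jumpSet d s, f k = ∑ j ∈ Icc 1 s, f (pos d j + 1) :=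
  sum_image fun _ hj _ hj' h => by_contra fun hne =>
    disjoint_left.mp (pairwiseDisjoint_window hj hj' hne) (jump_mem_window hd hj)
      (h ▸ jump_mem_window hd hj')

lemma variationSet_subset_sdiff_jumpSet {j : ℕ} (hj : j ∈ Icc 1 s) :
    variationSet d s j ⊆ Icc 2 (pos d (s + 1)) \ jumpSet d s := by
  intro k hk
  have hkW := variationSet_subset_window hk
  obtain ⟨hkj, hk⟩ := mem_erase.mp hk
  refine mem_sdiff.mpr ⟨?_, ?_⟩
  · have := window_subset hj hkW
    rw [mem_Icc] at this ⊢
    rw [mem_Ioc] at hk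
    omega
  · simp only [jumpSet, mem_image, not_exists, not_and]
    intro j' hj' hk'
    have hne : j' ≠ j := by rintro rfl; exact hkj hk'.symm
    exact disjoint_left.mp (pairwiseDisjoint_window hj' hj hne) (hk' ▸ jump_mem_window hd hj') hkW

end Blocks

theorem stmt14 (n s : ℕ) (hs : 1 ≤ s) (d : ℕ → ℕ)
    (hd : ∀ j ∈ Finset.Icc 1 (s + 1), 2 ≤ d j)
    (heven : ∀ j ∈ Finset.Icc 2 s, Even (d j))
    (hsum : ∑ j ∈ Finset.Icc 1 (s + 1), d j = n) :
    ∀ b : ℕ → ℝ,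
      (∑ j ∈ jumpSet d s, |b j|) -
        (∑ j ∈ Finset.Icc 2 n \ jumpSet d s, |b j|) = 1 →
      (∑ i ∈ Finset.Icc 1 n, (csum b i) ^ 2) / n ≥
        1 / ((n : ℝ) / d 1 + (∑ j ∈ Finset.Icc 2 s, 4 * (n : ℝ) / d j) +
          (n : ℝ) / d (s + 1)) := by
  intro b hb
  have hn : pos d (s + 1) = n := hsum
  set Q := ∑ i ∈ Icc 1 n, csum b i ^ 2
  set K := (d 1 : ℝ)⁻¹ + ∑ j ∈ Icc 2 s, 4 / (d j : ℝ) + (d (s + 1) : ℝ)⁻¹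
  have hQ : 0 ≤ Q := sum_nonneg fun _ _ => sq_nonneg _
  have hjumps : ∑ j ∈ Icc 1 s, |b (pos d j + 1)| ≤
      √(∑ j ∈ Icc 1 s, ∑ i ∈ window d s j, csum b i ^ 2) * √K +
        ∑ j ∈ Icc 1 s, ∑ k ∈ variationSet d s j, |b k| := by
    have := sum_abs_jump_le b (Icc 1 s) (pos d) (blockLen d s) (fun j => blockLen d s (j + 1))
      (fun j hj => ⟨one_le_blockLen (hd j (Icc_subset_Icc_right (by omega) hj)),
        blockLen_le_pos (mem_Icc.mp hj).1⟩)
      (fun j hj => one_le_blockLen (hd (j + 1) (by simp at hj ⊢; omega)))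
    rwa [sum_inv_blockLen hs heven] at this
  have hwindows : ∑ j ∈ Icc 1 s, ∑ i ∈ window d s j, csum b i ^ 2 ≤ Q :=
    sum_sum_le_sum_of_pairwiseDisjoint pairwiseDisjoint_window
      (fun j hj => hn ▸ window_subset hj) (fun _ _ => sq_nonneg _)
  have hvariation : ∑ j ∈ Icc 1 s, ∑ k ∈ variationSet d s j, |b k| ≤
      ∑ k ∈ Icc 2 n \ jumpSet d s, |b k| :=
    sum_sum_le_sum_of_pairwiseDisjoint
      (pairwiseDisjoint_window.mono_on fun _ _ => variationSet_subset_window)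
      (fun j hj => hn ▸ variationSet_subset_sdiff_jumpSet hd hj) (fun _ _ => abs_nonneg _)
  rw [sum_jumpSet hd] at hb
  have hQK : 1 ≤ Q * K := by
    have := mul_le_mul_of_nonneg_right (Real.sqrt_le_sqrt hwindows) (Real.sqrt_nonneg K)
    rw [← Real.one_le_sqrt, Real.sqrt_mul hQ]
    linarith
  have hK : 0 < K := pos_of_mul_pos_right (zero_lt_one.trans_le hQK) hQ
  have hden : (n : ℝ) / d 1 + ∑ j ∈ Icc 2 s, 4 * (n : ℝ) / d j + (n : ℝ) / d (s + 1) = n * K := by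
    simp only [K, mul_add, mul_sum, div_eq_mul_inv]
    ring_nf
  rw [hden, ge_iff_le, one_div, mul_inv, div_eq_mul_inv, mul_comm]
  exact mul_le_mul_of_nonneg_right ((inv_le_iff_one_le_mul₀ hK).mpr hQK) (by positivity)
end
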